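/- arXiv:math/0409373 — 6 statements merged into one kernel-verified Lean document; each statement's English description precedes it below -/
import Mathlib

section
/- Let t, d ∈ ℂ[[z]] be formal power series such that t² − 4d has a simple zero at z = 0, and let A₀ ∈ M₂(ℂ[[z]]) satisfy tr A₀ = t and det A₀ = d. Then A₀ is a regular element: for every B ∈ M₂(ℂ((z))) with B·A₀ = A₀·B there exist f, g ∈ ℂ((z)) such that B = f·1 + g·A₀; moreover, if B ∈ M₂(ℂ[[z]]) then f and g lie in ℂ[[z]]. -/
open PowerSeries

noncomputable section

/-- `K = ℂ((z))`, the field of formal Laurent series. -/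
abbrev K : Type := LaurentSeries ℂ

/-- `ℂ[[z]]` viewed as a subring of `ℂ((z))`. -/
def Oz : Subring K := (HahnSeries.ofPowerSeries ℤ ℂ).range

/-- `h ∈ ℂ[[z]]` has a simple zero at `z = 0`: constant coefficient vanishes and the
coefficient of `z` is nonzero. -/
def SimpleZero (h : PowerSeries ℂ) : Prop :=
  PowerSeries.coeff 0 h = 0 ∧ PowerSeries.coeff 1 h ≠ 0

/-!
Write `A₀ = [[a, b], [c, e]]`. A matrix `B` commutes with `A₀` iff the vectors
`(B₀₀ - B₁₁, B₀₁, B₁₀)` and `(a - e, b, c)` are proportional (all 2×2 minors vanish). Hence,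
as soon as `x (a - e) + y b + z c = 1` for some `x, y, z`, the factor of proportionality is
`g = x (B₀₀ - B₁₁) + y B₀₁ + z B₁₀` and `B = (B₀₀ - g a) • 1 + g • A₀`, which is integral when
`B` is. Such `x, y, z` exist in `ℂ[[z]]`: if `a - e`, `b`, `c` all vanished at `0`, then
`t² - 4d = (a - e)² + 4bc` would be divisible by `z²`, contradicting the simple zero.
-/

namespace Matrix

variable {R : Type*} [CommRing R]

theorem trace_sq_sub_four_mul_det_fin_two (A : Matrix (Fin 2) (Fin 2) R) :
    A.trace ^ 2 - 4 * A.det = (A 0 0 - A 1 1) ^ 2 + 4 * (A 0 1 * A 1 0) := by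
  rw [trace_fin_two, det_fin_two]
  ring

theorem eq_smul_one_add_smul_of_mul_comm_fin_two {A B : Matrix (Fin 2) (Fin 2) R} {x y z : R}
    (hxyz : x * (A 0 0 - A 1 1) + y * A 0 1 + z * A 1 0 = 1) (hAB : B * A = A * B) :
    let g := x * (B 0 0 - B 1 1) + y * B 0 1 + z * B 1 0
    B = (B 0 0 - g * A 0 0) • (1 : Matrix (Fin 2) (Fin 2) R) + g • A := by
  intro g
  have entry (i j : Fin 2) := congrFun (congrFun hAB i) j
  simp only [mul_apply, Fin.sum_univ_two] at entry
  have h₀₀ := entry 0 0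
  have h₀₁ := entry 0 1
  have h₁₀ := entry 1 0
  ext i j
  fin_cases i <;> fin_cases j <;>
    simp only [Fin.zero_eta, Fin.mk_one, Fin.isValue, add_apply, smul_apply, one_apply_eq,
      one_apply_ne, ne_eq, zero_ne_one, one_ne_zero, not_false_eq_true, smul_eq_mul, mul_one,
      mul_zero, zero_add, sub_add_cancel, g]
  · linear_combination -B 0 1 * hxyz - x * h₀₁ + z * h₀₀
  · linear_combination -B 1 0 * hxyz + x * h₁₀ - y * h₀₀
  · linear_combination (B 0 0 - B 1 1) * hxyz - y * h₀₁ + z * h₁₀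

end Matrix

namespace PowerSeries

variable {k : Type*} [Field k]

theorem exists_mul_add_mul_add_mul_eq_one_of_coeff_one_ne_zero {u v w c : k⟦X⟧}
    (h : coeff 1 (u ^ 2 + c * (v * w)) ≠ 0) :
    ∃ x y z : k⟦X⟧, x * u + y * v + z * w = 1 := by
  have hunit : constantCoeff u ≠ 0 ∨ constantCoeff v ≠ 0 ∨ constantCoeff w ≠ 0 := by
    by_contra! hzero
    obtain ⟨hu, hv, hw⟩ := hzero
    have hX : X ^ 2 ∣ u ^ 2 + c * (v * w) := by
      rw [← X_dvd_iff] at hu hv hw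
      exact dvd_add (pow_dvd_pow_of_dvd hu 2)
        (dvd_mul_of_dvd_right (pow_two (X : k⟦X⟧) ▸ mul_dvd_mul hv hw) c)
    exact h (X_pow_dvd_iff.mp hX 1 one_lt_two)
  rcases hunit with hu | hv | hw
  · exact ⟨u⁻¹, 0, 0, by simp [PowerSeries.inv_mul_cancel _ hu]⟩
  · exact ⟨0, v⁻¹, 0, by simp [PowerSeries.inv_mul_cancel _ hv]⟩
  · exact ⟨0, 0, w⁻¹, by simp [PowerSeries.inv_mul_cancel _ hw]⟩

end PowerSeries

/-- If `t² - 4d` has a simple zero at `z = 0` and `A₀ ∈ M₂(ℂ[[z]])` has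
trace `t` and determinant `d`, then `A₀` is regular: every `B ∈ M₂(ℂ((z)))` commuting with
`A₀` is of the form `f·1 + g·A₀` with `f, g ∈ ℂ((z))`; moreover if `B ∈ M₂(ℂ[[z]])` then
`f, g ∈ ℂ[[z]]`. -/
theorem stmt0 (t d : PowerSeries ℂ) (hsz : SimpleZero (t ^ 2 - 4 * d))
    (A₀ : Matrix (Fin 2) (Fin 2) (PowerSeries ℂ))
    (htr : A₀.trace = t) (hdet : A₀.det = d)
    (B : Matrix (Fin 2) (Fin 2) K)
    (hcomm : B * A₀.map (HahnSeries.ofPowerSeries ℤ ℂ) =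
      A₀.map (HahnSeries.ofPowerSeries ℤ ℂ) * B) :
    ∃ f g : K,
      B = f • (1 : Matrix (Fin 2) (Fin 2) K) +
              g • A₀.map (HahnSeries.ofPowerSeries ℤ ℂ) ∧
      ((∀ i j, B i j ∈ Oz) → f ∈ Oz ∧ g ∈ Oz) := by
  set φ := HahnSeries.ofPowerSeries ℤ ℂ
  have hdisc : coeff 1 ((A₀ 0 0 - A₀ 1 1) ^ 2 + 4 * (A₀ 0 1 * A₀ 1 0)) ≠ 0 := by
    rw [← A₀.trace_sq_sub_four_mul_det_fin_two, htr, hdet]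
    exact hsz.2
  obtain ⟨x, y, z, hxyz⟩ := exists_mul_add_mul_add_mul_eq_one_of_coeff_one_ne_zero hdisc
  have hxyzK : φ x * (A₀.map φ 0 0 - A₀.map φ 1 1) + φ y * A₀.map φ 0 1 +
      φ z * A₀.map φ 1 0 = 1 := by
    simpa only [Matrix.map_apply, map_add, map_mul, map_sub, map_one] using congrArg φ hxyz
  refine ⟨_, _, Matrix.eq_smul_one_add_smul_of_mul_comm_fin_two hxyzK hcomm, fun hB => ?_⟩
  have hφ (p : PowerSeries ℂ) : φ p ∈ Oz := ⟨p, rfl⟩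
  have hg : φ x * (B 0 0 - B 1 1) + φ y * B 0 1 + φ z * B 1 0 ∈ Oz :=
    add_mem (add_mem (mul_mem (hφ x) (sub_mem (hB 0 0) (hB 1 1))) (mul_mem (hφ y) (hB 0 1)))
      (mul_mem (hφ z) (hB 1 0))
  exact ⟨sub_mem (hB 0 0) (mul_mem hg (hφ _)), hg⟩

end
end

section
/- Let t, d ∈ ℂ[[z]] be such that t² − 4d has a simple zero at z = 0, and let A₀ ∈ M₂(ℂ[[z]]) satisfy tr A₀ = t and det A₀ = d. Suppose B ∈ M₂(ℂ((z))) satisfies B·A₀ = A₀·B and dB/dz = C + (A₀·D − D·A₀) for some C ∈ M₂(ℂ[[z]]) and some D ∈ M₂(ℂ((z))). Then B ∈ M₂(ℂ[[z]]). -/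
open PowerSeries

noncomputable section

/-- The formal derivative `d/dz` on Laurent series. -/
def lD (f : K) : K where
  coeff n := ((n : ℂ) + 1) * f.coeff (n + 1)
  isPWO_support' := by
    apply Set.IsPWO.mono ((f.isPWO_support).image_of_monotone
      (f := fun m : ℤ => m - 1) (fun a b hab => by simpa using hab))
    intro n hn
    refine ⟨n + 1, ?_, by ring⟩
    intro h0
    apply hn
    simp [h0]

/-!
Since `Δ = t² - 4d` is nonzero, `A₀` is not scalar, so its commutant is `ℂ((z))[A₀]` and
`B = f + g A₀`. Commutators are traceless, so `tr B'` and `tr (A₀ B')` lie in `ℂ[[z]]`, and a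
direct computation gives `4 tr (A₀ B') - 2 tr A₀ tr B' = 2 Δ g' + Δ' g`. Multiplying by `g`
turns the right side into `(g² Δ)'`: if `g` had a pole of order `m > 0`, this derivative would
have order exactly `-2m` because `Δ` has a simple zero, while `g (2 Δ g' + Δ' g)` has order at
least `-m`. Hence `g ∈ ℂ[[z]]`; then `tr B = 2f + g t` has derivative in `ℂ[[z]]`, so `f` has no
pole either.
-/

lemma lD_coeff (x : K) (n : ℤ) : (lD x).coeff n = ((n : ℂ) + 1) * x.coeff (n + 1) := rfl

/-- The Euler operator `z d/dz`; unlike `lD` it does not shift supports, so its Leibniz rule is a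
termwise identity on the antidiagonal. -/
def eulerOp (x : K) : K where
  coeff n := n * x.coeff n
  isPWO_support' := x.isPWO_support.mono fun _ hn => right_ne_zero_of_mul hn

lemma eulerOp_mul (x y : K) : eulerOp (x * y) = eulerOp x * y + x * eulerOp y := by
  ext n
  have hx : (eulerOp x).support ⊆ x.support := fun _ hn => right_ne_zero_of_mul hn
  have hy : (eulerOp y).support ⊆ y.support := fun _ hn => right_ne_zero_of_mul hn
  rw [HahnSeries.coeff_add, HahnSeries.coeff_mul_left' x.isPWO_support hx,
    HahnSeries.coeff_mul_right' y.isPWO_support hy]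
  change (n : ℂ) * (x * y).coeff n = _
  rw [HahnSeries.coeff_mul, Finset.mul_sum, ← Finset.sum_add_distrib]
  refine Finset.sum_congr rfl fun ij hij => ?_
  rw [Finset.mem_antidiagonal] at hij
  change (n : ℂ) * _ = (ij.1 : ℂ) * _ * _ + _ * ((ij.2 : ℂ) * _)
  rw [← hij.2.2]
  push_cast
  ring

lemma lD_eq_single_mul_eulerOp (x : K) : lD x = HahnSeries.single (-1) 1 * eulerOp x := by
  ext n
  rw [HahnSeries.coeff_single_mul, one_mul, sub_neg_eq_add]
  change _ = ((n + 1 : ℤ) : ℂ) * _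
  push_cast
  rfl

lemma lD_one : lD 1 = 0 := by
  ext n
  change ((n : ℂ) + 1) * (HahnSeries.single 0 (1 : ℂ)).coeff (n + 1) = 0
  rw [HahnSeries.coeff_single]
  split_ifs with h
  · rw [show n = -1 by omega]; simp
  · rw [mul_zero]

def lDDerivation : Derivation ℂ K K where
  toFun := lD
  map_add' x y := by ext n; exact mul_add ((n : ℂ) + 1) _ _
  map_smul' c x := by
    ext n
    simp only [RingHom.id_apply, Algebra.smul_def, LaurentSeries.algebraMap_apply,
      HahnSeries.C_mul_eq_smul, lD_coeff, HahnSeries.coeff_smul]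
    ring
  map_one_eq_zero' := lD_one
  leibniz' x y := by
    change lD (x * y) = x * lD y + y * lD x
    simp only [lD_eq_single_mul_eulerOp, eulerOp_mul]
    ring

@[simp]
lemma lDDerivation_apply (x : K) : lDDerivation x = lD x := rfl

lemma mem_Oz_iff {x : K} : x ∈ Oz ↔ ∀ n < 0, x.coeff n = 0 := by
  rw [Oz, RingHom.mem_range, ← LaurentSeries.val_le_one_iff_eq_coe, ← neg_zero,
    ← LaurentSeries.valuation_le_iff_coeff_lt_eq_zero]
  simp

lemma mem_Oz_iff_zero_le_order {x : K} : x ∈ Oz ↔ 0 ≤ x.order := by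
  rcases eq_or_ne x 0 with rfl | hx
  · simp [zero_mem]
  · rw [mem_Oz_iff, HahnSeries.le_order_iff_forall hx]

lemma mem_Oz_of_two_mul_mem {x : K} (hx : 2 * x ∈ Oz) : x ∈ Oz := by
  have hC : HahnSeries.C (2⁻¹ : ℂ) ∈ Oz := ⟨PowerSeries.C 2⁻¹, HahnSeries.ofPowerSeries_C _⟩
  convert mul_mem hC hx using 1
  rw [← mul_assoc, ← map_ofNat HahnSeries.C 2, ← map_mul, inv_mul_cancel₀ two_ne_zero, map_one,
    one_mul]

lemma lD_ne_zero_and_order_lD {x : K} (hx : x.order ≠ 0) :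
    lD x ≠ 0 ∧ (lD x).order = x.order - 1 := by
  have hx0 : x ≠ 0 := by rintro rfl; exact hx HahnSeries.order_zero
  have hc : (lD x).coeff (x.order - 1) ≠ 0 := by
    rw [lD_coeff, sub_add_cancel, Int.cast_sub, Int.cast_one, sub_add_cancel]
    exact mul_ne_zero (Int.cast_ne_zero.2 hx) (HahnSeries.coeff_order_eq_zero.not.2 hx0)
  have hD0 := HahnSeries.ne_zero_of_coeff_ne_zero hc
  refine ⟨hD0, le_antisymm (HahnSeries.order_le_of_coeff_ne_zero hc) ?_⟩
  rw [HahnSeries.le_order_iff_forall hD0]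
  intro j hj
  rw [lD_coeff, HahnSeries.coeff_eq_zero_of_lt_order (by omega), mul_zero]

lemma mem_Oz_of_lD_mem {x : K} (hx : lD x ∈ Oz) : x ∈ Oz := by
  by_contra hx'
  rw [mem_Oz_iff_zero_le_order, not_le] at hx'
  obtain ⟨-, hord⟩ := lD_ne_zero_and_order_lD hx'.ne
  rw [mem_Oz_iff_zero_le_order, hord] at hx
  omega

lemma order_ofPowerSeries_of_simpleZero {h : PowerSeries ℂ} (hh : SimpleZero h) :
    (h : K).order = 1 := by
  have h0 : (h : K).coeff 0 = 0 := (HahnSeries.ofPowerSeries_apply_coeff h 0).trans hh.1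
  have h1 : (h : K).coeff 1 ≠ 0 :=
    (HahnSeries.ofPowerSeries_apply_coeff h 1).trans_ne hh.2
  have hne := HahnSeries.ne_zero_of_coeff_ne_zero h1
  refine le_antisymm (HahnSeries.order_le_of_coeff_ne_zero h1)
    ((HahnSeries.le_order_iff_forall hne).2 fun j hj => ?_)
  rcases lt_or_eq_of_le (show j ≤ 0 by omega) with hj | rfl
  exacts [mem_Oz_iff.1 ⟨h, rfl⟩ j hj, h0]

lemma mem_Oz_of_two_mul_mul_lD_add_lD_mul_mem {h : PowerSeries ℂ} (hh : SimpleZero h) {g : K}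
    (hg : 2 * (h : K) * lD g + lD h * g ∈ Oz) : g ∈ Oz := by
  set Δ := HahnSeries.ofPowerSeries ℤ ℂ h
  have hΔ : Δ.order = 1 := order_ofPowerSeries_of_simpleZero hh
  have hΔ0 : Δ ≠ 0 := by rintro hΔ0; simp [hΔ0] at hΔ
  by_contra hg'
  rw [mem_Oz_iff_zero_le_order, not_le] at hg'
  have hg0 : g ≠ 0 := by rintro rfl; simp at hg'
  have hderiv : lD (g * g * Δ) = g * (2 * Δ * lD g + lD Δ * g) := by
    simp only [← lDDerivation_apply, Derivation.leibniz, smul_eq_mul]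
    ring
  have hord : (g * g * Δ).order = 2 * g.order + 1 := by
    rw [HahnSeries.order_mul (mul_ne_zero hg0 hg0) hΔ0, HahnSeries.order_mul hg0 hg0, hΔ]
    ring
  obtain ⟨hY, hordY⟩ := lD_ne_zero_and_order_lD (x := g * g * Δ) (by omega)
  rw [hderiv] at hY hordY
  rw [HahnSeries.order_mul hg0 (right_ne_zero_of_mul hY), hord] at hordY
  have := mem_Oz_iff_zero_le_order.1 hg
  omega

namespace Matrix

variable {R : Type*} [CommRing R]

lemma discr_map {S : Type*} [CommRing S] (f : R →+* S) (A : Matrix (Fin 2) (Fin 2) R) :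
    (A.map f).discr = f A.discr := by
  simp [discr_fin_two, RingHom.map_det, ← AddMonoidHom.map_trace, map_ofNat]

lemma discr_scalar (c : R) : (scalar (Fin 2) c).discr = 0 := by
  simp only [scalar_apply, discr_fin_two, trace_diagonal, Finset.sum_const, Finset.card_univ,
    Fintype.card_fin, nsmul_eq_mul, Nat.cast_ofNat, det_diagonal, Finset.prod_const]
  ring

lemma exists_eq_smul_one_add_smul_of_commute {F : Type*} [Field F]
    {A B : Matrix (Fin 2) (Fin 2) F} (hA : A ∉ Set.range (scalar (Fin 2))) (hAB : Commute B A) :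
    ∃ f g : F, B = f • 1 + g • A := by
  have e := fun i j => congr_fun₂ hAB.eq i j
  simp only [mul_apply, Fin.sum_univ_two] at e
  suffices ∃ g, B 0 1 = g * A 0 1 ∧ B 1 0 = g * A 1 0 ∧ B 0 0 - B 1 1 = g * (A 0 0 - A 1 1) by
    obtain ⟨g, h01, h10, hd⟩ := this
    refine ⟨B 0 0 - g * A 0 0, g, ?_⟩
    ext i j
    fin_cases i <;> fin_cases j <;>
      simp only [Fin.isValue, Fin.zero_eta, Fin.mk_one, add_apply, smul_apply, smul_eq_mul,
        one_apply_eq, one_apply_ne zero_ne_one, one_apply_ne one_ne_zero, mul_one, mul_zero,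
        zero_add, sub_add_cancel, h01, h10]
    linear_combination -hd
  have hA' : A 0 1 ≠ 0 ∨ A 1 0 ≠ 0 ∨ A 0 0 - A 1 1 ≠ 0 := by
    by_contra! h
    refine hA ⟨A 0 0, ext fun i j => ?_⟩
    fin_cases i <;> fin_cases j <;> simp [h.1, h.2.1, sub_eq_zero.1 h.2.2]
  rcases hA' with h | h | h
  · refine ⟨B 0 1 / A 0 1, ?_, ?_, ?_⟩ <;> field_simp
    · linear_combination e 1 1
    · linear_combination e 0 1
  · refine ⟨B 1 0 / A 1 0, ?_, ?_, ?_⟩ <;> field_simp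
    · linear_combination e 0 0
    · linear_combination -e 1 0
  · refine ⟨(B 0 0 - B 1 1) / (A 0 0 - A 1 1), ?_, ?_, ?_⟩ <;> field_simp
    · linear_combination -e 0 1
    · linear_combination e 1 0

lemma trace_mul_add_commutator {n : Type*} [Fintype n] {M A : Matrix n n R} (h : Commute M A)
    (C D : Matrix n n R) : (M * (C + (A * D - D * A))).trace = (M * C).trace := by
  rw [Matrix.mul_add, Matrix.mul_sub, trace_add, trace_sub, ← Matrix.mul_assoc, h.eq,
    trace_mul_cycle', Matrix.mul_assoc, sub_self, add_zero]

lemma trace_mem {n : Type*} [Fintype n] [DecidableEq n] {S : Subring R} {M : Matrix n n R}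
    (hM : M ∈ S.matrix) : M.trace ∈ S :=
  sum_mem fun i _ => hM i i

end Matrix

open Matrix

lemma four_mul_trace_mul_map_lD_sub_two_mul_trace_mul_trace_map_lD
    (A : Matrix (Fin 2) (Fin 2) K) (f g : K) :
    4 * (A * (f • 1 + g • A).map lD).trace - 2 * A.trace * ((f • 1 + g • A).map lD).trace =
      2 * A.discr * lD g + lD A.discr * g := by
  have h4 : lDDerivation 4 = 0 := by exact_mod_cast lDDerivation.map_natCast 4
  simp only [trace_fin_two, Fin.isValue, mul_apply, map_apply, Matrix.add_apply,
    Matrix.smul_apply, smul_eq_mul, ← lDDerivation_apply, map_add, Derivation.leibniz,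
    Fin.sum_univ_two, one_apply_eq, Derivation.map_one_eq_zero, mul_zero, one_mul, zero_add, ne_eq,
    one_ne_zero, not_false_eq_true, one_apply_ne, map_zero, zero_mul, add_zero, zero_ne_one,
    mul_one, discr_fin_two, det_fin_two, map_sub, Derivation.leibniz_pow, Nat.add_one_sub_one,
    pow_one, nsmul_eq_mul, Nat.cast_ofNat, h4]
  ring

/-- Under the non-degeneracy condition, if `B ∈ M₂(ℂ((z)))` commutes with
`A₀` and `dB/dz ∈ M₂(ℂ[[z]]) + [A₀, M₂(ℂ((z)))]`, then `B ∈ M₂(ℂ[[z]])`. -/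
theorem stmt1 (t d : PowerSeries ℂ) (hsz : SimpleZero (t ^ 2 - 4 * d))
    (A₀ : Matrix (Fin 2) (Fin 2) (PowerSeries ℂ))
    (htr : A₀.trace = t) (hdet : A₀.det = d)
    (B : Matrix (Fin 2) (Fin 2) K)
    (hcomm : B * A₀.map (HahnSeries.ofPowerSeries ℤ ℂ) =
      A₀.map (HahnSeries.ofPowerSeries ℤ ℂ) * B)
    (C D : Matrix (Fin 2) (Fin 2) K)
    (hC : ∀ i j, C i j ∈ Oz)
    (hder : B.map lD = C + (A₀.map (HahnSeries.ofPowerSeries ℤ ℂ) * D -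
      D * A₀.map (HahnSeries.ofPowerSeries ℤ ℂ))) :
    ∀ i j, B i j ∈ Oz := by
  set A := A₀.map (HahnSeries.ofPowerSeries ℤ ℂ)
  have hA : A ∈ Oz.matrix := fun i j => ⟨A₀ i j, rfl⟩
  have hΔ : A.discr = HahnSeries.ofPowerSeries ℤ ℂ (t ^ 2 - 4 * d) := by
    rw [discr_map, discr_fin_two, htr, hdet]
  have hA_nonscalar : A ∉ Set.range (scalar (Fin 2)) := by
    rintro ⟨c, hc⟩
    rw [← hc, discr_scalar, eq_comm, map_eq_zero_iff _ HahnSeries.ofPowerSeries_injective] at hΔ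
    exact hsz.2 (by simp [hΔ])
  obtain ⟨f, g, rfl⟩ := exists_eq_smul_one_add_smul_of_commute hA_nonscalar hcomm
  have htr : ∀ M ∈ Oz.matrix, Commute M A → (M * (f • 1 + g • A).map lD).trace ∈ Oz :=
    fun M hM hMA => by
      rw [hder, trace_mul_add_commutator hMA]
      exact trace_mem (mul_mem hM hC)
  have htrB' : ((f • 1 + g • A).map lD).trace ∈ Oz := by
    simpa using htr 1 (one_mem _) (Commute.one_left A)
  have hg : g ∈ Oz := by
    refine mem_Oz_of_two_mul_mul_lD_add_lD_mul_mem hsz ?_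
    rw [← hΔ, ← four_mul_trace_mul_map_lD_sub_two_mul_trace_mul_trace_map_lD]
    exact sub_mem (mul_mem (natCast_mem Oz 4) (htr A hA (Commute.refl A)))
      (mul_mem (mul_mem (natCast_mem Oz 2) (trace_mem hA)) htrB')
  have hf : f ∈ Oz := by
    have htrB : (f • 1 + g • A).trace ∈ Oz :=
      mem_Oz_of_lD_mem (by rwa [← lDDerivation_apply, AddMonoidHom.map_trace])
    refine mem_Oz_of_two_mul_mem ?_
    convert sub_mem htrB (mul_mem hg (trace_mem hA)) using 1
    simp only [trace_add, trace_smul, trace_one, Fintype.card_fin, Nat.cast_ofNat, smul_eq_mul,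
      add_sub_cancel_right, mul_comm]
  have h1 : (1 : Matrix (Fin 2) (Fin 2) K) ∈ Oz.matrix := one_mem _
  exact fun i j => add_mem (mul_mem hf (h1 i j)) (mul_mem hg (hA i j))

end
end

section
/- Let t, d ∈ ℂ[[z]] be such that t² − 4d has a simple zero at z = 0, and let A₀ ∈ M₂(ℂ[[z]]) satisfy tr A₀ = t and det A₀ = d. Then every B ∈ M₂(ℂ((z))) with A₀·B − B·A₀ ∈ M₂(ℂ[[z]]) can be written as B = S + T with S ∈ M₂(ℂ[[z]]) and T ∈ M₂(ℂ((z))) satisfying T·A₀ = A₀·T. -/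
/-!
Write `A₀ = [[a, b], [c, e]]` and `g = a - e`, so that `t² - 4d = g² + 4bc`. If `b`, `c`, `g` all
vanished at `z = 0`, this discriminant would be divisible by `z²`; hence `b, c, g` generate the unit
ideal of `ℂ[[z]]`, say `xb + yc + wg = 1`. The entries of `[A₀, B]` are, up to sign, the `2 × 2`
minors of the rows `(b, c, g)` and `(B₀₁, B₁₀, B₀₀ - B₁₁)`, so with `β = xB₀₁ + yB₁₀ + w(B₀₀ - B₁₁)`
the matrix `T = βA₀ + (B₀₀ - βa)·1`, which commutes with `A₀`, differs from `B` by a matrix over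
`ℂ[[z]]`.
-/

open PowerSeries

noncomputable section

theorem Matrix.exists_mem_add_commute_of_commutator_mem {R : Type*} [CommRing R] (O : Subring R)
    (A B : Matrix (Fin 2) (Fin 2) R) {x y w : R} (hx : x ∈ O) (hy : y ∈ O) (hw : w ∈ O)
    (hunimod : x * A 0 1 + y * A 1 0 + w * (A 0 0 - A 1 1) = 1)
    (hcomm : ∀ i j, (A * B - B * A) i j ∈ O) :
    ∃ S T : Matrix (Fin 2) (Fin 2) R, (∀ i j, S i j ∈ O) ∧ T * A = A * T ∧ B = S + T := by
  set β := x * B 0 1 + y * B 1 0 + w * (B 0 0 - B 1 1)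
  set T := β • A + (B 0 0 - β * A 0 0) • (1 : Matrix (Fin 2) (Fin 2) R)
  have hT : T * A = A * T := by
    simp only [T, add_mul, mul_add, Matrix.smul_mul, Matrix.mul_smul, Matrix.one_mul,
      Matrix.mul_one]
  refine ⟨B - T, T, ?_, hT, (sub_add_cancel B T).symm⟩
  have k00 := hcomm 0 0
  have k01 := hcomm 0 1
  have k10 := hcomm 1 0
  simp only [Matrix.sub_apply, Matrix.mul_apply, Fin.sum_univ_two] at k00 k01 k10
  -- each entry of `B - T` is an `O`-combination of the entries of `A * B - B * A`
  intro i j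
  fin_cases i <;> fin_cases j <;>
    simp only [T, Matrix.sub_apply, Matrix.add_apply, Matrix.smul_apply, Matrix.one_apply,
      smul_eq_mul, Fin.zero_eta, Fin.mk_one, Fin.isValue, if_true, if_false, mul_one, mul_zero,
      add_zero, zero_ne_one, one_ne_zero]
  · simp
  · convert O.sub_mem (O.mul_mem hw k01) (O.mul_mem hy k00) using 1
    linear_combination (-B 0 1) * hunimod
  · convert O.sub_mem (O.mul_mem hx k00) (O.mul_mem hw k10) using 1
    linear_combination (-B 1 0) * hunimod
  · convert O.sub_mem (O.mul_mem hx k01) (O.mul_mem hy k10) using 1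
    linear_combination (B 0 0 - B 1 1) * hunimod

theorem PowerSeries.exists_mul_add_mul_add_mul_eq_one {k : Type*} [Field k] {b c g : k⟦X⟧}
    (r : k⟦X⟧) (h : coeff 1 (g ^ 2 + r * b * c) ≠ 0) :
    ∃ x y w : k⟦X⟧, x * b + y * c + w * g = 1 := by
  have unit_or_X_dvd (f : k⟦X⟧) : (∃ v, v * f = 1) ∨ X ∣ f := by
    by_cases hf : constantCoeff f = 0
    · exact .inr (X_dvd_iff.mpr hf)
    · exact .inl ⟨f⁻¹, PowerSeries.inv_mul_cancel f hf⟩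
  rcases unit_or_X_dvd b with ⟨v, hv⟩ | ⟨b', rfl⟩
  · exact ⟨v, 0, 0, by simp [hv]⟩
  rcases unit_or_X_dvd c with ⟨v, hv⟩ | ⟨c', rfl⟩
  · exact ⟨0, v, 0, by simp [hv]⟩
  rcases unit_or_X_dvd g with ⟨v, hv⟩ | ⟨g', rfl⟩
  · exact ⟨0, 0, v, by simp [hv]⟩
  have hX2 : X ^ 2 ∣ (X * g') ^ 2 + r * (X * b') * (X * c') :=
    ⟨g' ^ 2 + r * b' * c', by ring⟩
  exact absurd (X_pow_dvd_iff.mp hX2 1 one_lt_two) h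

/-- Under the non-degeneracy condition, every `B ∈ M₂(ℂ((z)))` with
`[A₀, B] ∈ M₂(ℂ[[z]])` can be written as `B = S + T` with `S ∈ M₂(ℂ[[z]])` and `T`
commuting with `A₀`. -/
theorem stmt4 (t d : PowerSeries ℂ) (hsz : SimpleZero (t ^ 2 - 4 * d))
    (A₀ : Matrix (Fin 2) (Fin 2) (PowerSeries ℂ))
    (htr : A₀.trace = t) (hdet : A₀.det = d)
    (B : Matrix (Fin 2) (Fin 2) K)
    (hcomm : ∀ i j, (A₀.map (HahnSeries.ofPowerSeries ℤ ℂ) * B -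
      B * A₀.map (HahnSeries.ofPowerSeries ℤ ℂ)) i j ∈ Oz) :
    ∃ S T : Matrix (Fin 2) (Fin 2) K,
      (∀ i j, S i j ∈ Oz) ∧
      T * A₀.map (HahnSeries.ofPowerSeries ℤ ℂ) =
        A₀.map (HahnSeries.ofPowerSeries ℤ ℂ) * T ∧
      B = S + T := by
  have hdisc : t ^ 2 - 4 * d = (A₀ 0 0 - A₀ 1 1) ^ 2 + 4 * A₀ 0 1 * A₀ 1 0 := by
    rw [← htr, ← hdet, Matrix.trace_fin_two, Matrix.det_fin_two]
    ring
  obtain ⟨x, y, w, hxyw⟩ :=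
    PowerSeries.exists_mul_add_mul_add_mul_eq_one 4 (hdisc ▸ hsz.2)
  refine Matrix.exists_mem_add_commute_of_commutator_mem Oz _ B ⟨x, rfl⟩ ⟨y, rfl⟩ ⟨w, rfl⟩
    ?_ hcomm
  simpa only [Matrix.map_apply, map_add, map_mul, map_sub, map_one] using
    congrArg (HahnSeries.ofPowerSeries ℤ ℂ) hxyw

end
end

section
/- Let A ∈ M₂(ℂ[[z,λ]]) be such that the discriminant (tr A(z,0))² − 4·det A(z,0) is a unit of ℂ[[z]] (its constant coefficient is nonzero). Then there exists a matrix R ∈ M₂(ℂ[[z,λ]]), invertible over ℂ[[z,λ]], such that Gauge_λ(A,R) = R⁻¹AR + λR⁻¹(dR/dz) is a diagonal matrix. -/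
open PowerSeries

noncomputable section

/-- `K̂ = ℂ((z))[[λ]]`, formal power series in `λ` with Laurent series coefficients. -/
abbrev Khat : Type := PowerSeries K

/-- The `λ`-coefficientwise formal derivative `d/dz` on `ℂ((z))[[λ]]`. -/
def pD (F : Khat) : Khat := PowerSeries.mk fun i => lD (PowerSeries.coeff i F)

/-- `F ∈ ℂ[[z,λ]]`: every `λ`-coefficient of `F` lies in `ℂ[[z]]`. -/
def MemOhat (F : Khat) : Prop := ∀ i, PowerSeries.coeff i F ∈ Oz

/-- The `λ`-gauge transform `Gauge_λ(A,R) = R⁻¹AR + λ·R⁻¹·(dR/dz)`. -/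
def lamGauge (A R : Matrix (Fin 2) (Fin 2) Khat) : Matrix (Fin 2) (Fin 2) Khat :=
  R⁻¹ * A * R + (PowerSeries.X : Khat) • (R⁻¹ * R.map pD)

/-- The constant term in `λ`: `F(z,0)`. -/
def ev0 : Khat →+* K := PowerSeries.constantCoeff

/-- The residue of a Laurent series: the coefficient of `z⁻¹`. -/
def res (f : K) : ℂ := f.coeff (-1)

/-- The residue of an element of `ℂ((z))[[λ]]`, an element of `ℂ[[λ]]`. -/
def resHat (F : Khat) : PowerSeries ℂ := PowerSeries.mk fun i => res (PowerSeries.coeff i F)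

open Matrix Finset

/-!
Since the discriminant of `A(0,0)` is nonzero, `A(0,0)` has distinct eigenvalues and an explicit
eigenbasis. Both remaining steps are one order-by-order recursion: find `R = Σ Rₙ λⁿ` and a
diagonal `D` with `A R + λ d(R) = R D`, given `A₀ R₀ = R₀ D₀` for a diagonal `D₀` whose entries
differ by units. The unknowns of order `n + 1` enter only as `A₀ R_{n+1} - R_{n+1} D₀ - R₀ D_{n+1}`;
writing `R_{n+1} = R₀ Y` this is the Sylvester equation `D₀ Y - Y D₀ = diag H - H`, whose diagonal
part fixes `D_{n+1}` and whose off-diagonal part is solvable because the entries of `D₀` differ by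
units. With `d = 0` over `ℂ[[z]]` this diagonalizes `A(z,0)`; with `d = d/dz` over `ℂ[[z]][[λ]]`
it gives the gauge. `R` is invertible because `R₀` is.
-/

section FormalDiagonalization

variable {ι S : Type*} [CommRing S]

def PowerSeries.coeffwise (d : S → S) (F : S⟦X⟧) : S⟦X⟧ := mk fun n => d (coeff n F)

theorem Matrix.ext_coeff {M N : Matrix ι ι S⟦X⟧} (h : ∀ n, M.map (coeff n) = N.map (coeff n)) :
    M = N :=
  Matrix.ext fun i j => PowerSeries.ext fun n => congrFun (congrFun (h n) i) j

theorem Matrix.map_coeff_X_smul_succ (M : Matrix ι ι S⟦X⟧) (n : ℕ) :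
    ((X : S⟦X⟧) • M).map (coeff (n + 1)) = M.map (coeff n) := by
  ext i j
  simp [coeff_succ_X_mul]

theorem Matrix.map_coeff_zero_X_smul (M : Matrix ι ι S⟦X⟧) :
    ((X : S⟦X⟧) • M).map (coeff 0) = 0 := by
  ext i j
  simp

variable [Fintype ι]

theorem Matrix.map_coeff_mul (M N : Matrix ι ι S⟦X⟧) (n : ℕ) :
    (M * N).map (coeff n) =
      ∑ k ∈ range (n + 1), M.map (coeff k) * N.map (coeff (n - k)) := by
  ext i j
  simp only [map_apply, mul_apply, map_sum, coeff_mul, Matrix.sum_apply,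
    Finset.Nat.sum_antidiagonal_eq_sum_range_succ_mk]
  exact Finset.sum_comm

variable [DecidableEq ι]

def sylvesterSolve (m : ι → S) (H : Matrix ι ι S) : Matrix ι ι S :=
  of fun i j => if i = j then 0 else Ring.inverse (m j - m i) * H i j

theorem add_diagonal_mul_sylvesterSolve {m : ι → S} (hm : Pairwise fun i j => IsUnit (m i - m j))
    (H : Matrix ι ι S) :
    H + diagonal m * sylvesterSolve m H =
      diagonal (fun i => H i i) + sylvesterSolve m H * diagonal m := by
  ext i j
  by_cases hij : i = j
  · subst hij; simp [sylvesterSolve, diagonal_mul, mul_diagonal]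
  · simp only [sylvesterSolve, Matrix.add_apply, diagonal_mul, mul_diagonal, of_apply, if_neg hij,
      diagonal_apply_ne _ hij]
    linear_combination (-H i j) * Ring.mul_inverse_cancel _ (hm (Ne.symm hij))

section GaugeCoeffs

variable (a : ℕ → Matrix ι ι S) (d : S → S) (P : Matrix ι ι S) (m : ι → S)

def gaugeDefect (c : ℕ → Matrix ι ι S × (ι → S)) (n : ℕ) : Matrix ι ι S :=
  ∑ k ∈ range (n + 1), a (k + 1) * (c (n - k)).1 + (c n).1.map d
    - ∑ k ∈ range n, (c (k + 1)).1 * diagonal (c (n - k)).2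

/-- With `G = gaugeDefect a d _ n`, the `λ^(n+1)`-coefficient of `A R + λ d(R) = R D` reads
`a 0 * R_{n+1} - R_{n+1} * diagonal m - P * D_{n+1} + G = 0`; it is solved by
`R_{n+1} = P * sylvesterSolve m (P⁻¹ * G)` and `D_{n+1} = diag (P⁻¹ * G)`. The sums are `attach`ed
only to make the recursion well founded; `gaugeCoeffs_succ` restates it through `gaugeDefect`. -/
def gaugeCoeffs : ℕ → Matrix ι ι S × (ι → S)
  | 0 => (P, m)
  | n + 1 =>
    let H := P⁻¹ * (∑ k ∈ (range (n + 1)).attach, a (k + 1) * (gaugeCoeffs (n - k)).1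
      + (gaugeCoeffs n).1.map d
      - ∑ k ∈ (range n).attach, (gaugeCoeffs (k + 1)).1 * diagonal (gaugeCoeffs (n - k)).2)
    (P * sylvesterSolve m H, fun i => H i i)
  termination_by n => n
  decreasing_by
  · omega
  · omega
  · have := Finset.mem_range.mp k.2; omega
  · omega

theorem gaugeCoeffs_zero : gaugeCoeffs a d P m 0 = (P, m) := by
  rw [gaugeCoeffs]

theorem gaugeCoeffs_succ (n : ℕ) :
    gaugeCoeffs a d P m (n + 1) =
      (P * sylvesterSolve m (P⁻¹ * gaugeDefect a d (gaugeCoeffs a d P m) n),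
        fun i => (P⁻¹ * gaugeDefect a d (gaugeCoeffs a d P m) n) i i) := by
  rw [gaugeCoeffs, gaugeDefect,
    Finset.sum_attach _ (fun k => a (k + 1) * (gaugeCoeffs a d P m (n - k)).1),
    Finset.sum_attach _ (fun k =>
      (gaugeCoeffs a d P m (k + 1)).1 * diagonal (gaugeCoeffs a d P m (n - k)).2)]

variable {a d P m} in
theorem gaugeCoeffs_spec (hP : IsUnit P.det) (hm : Pairwise fun i j => IsUnit (m i - m j))
    (hA : a 0 * P = P * diagonal m) (n : ℕ) :
    ∑ k ∈ range (n + 2), a k * (gaugeCoeffs a d P m (n + 1 - k)).1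
        + (gaugeCoeffs a d P m n).1.map d =
      ∑ k ∈ range (n + 2),
        (gaugeCoeffs a d P m k).1 * diagonal (gaugeCoeffs a d P m (n + 1 - k)).2 := by
  set c := gaugeCoeffs a d P m
  set H := P⁻¹ * gaugeDefect a d c n with hH
  set Y := sylvesterSolve m H with hY
  have hc0 : c 0 = (P, m) := gaugeCoeffs_zero a d P m
  have hcs : c (n + 1) = (P * Y, fun i => H i i) := gaugeCoeffs_succ a d P m n
  have hPH : P * H = gaugeDefect a d c n := by
    rw [hH, ← mul_assoc, mul_nonsing_inv _ hP, one_mul]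
  have key : gaugeDefect a d c n + a 0 * (P * Y) =
      P * diagonal (fun i => H i i) + P * Y * diagonal m := by
    rw [← hPH, ← mul_assoc (a 0), hA, mul_assoc P, ← mul_add, hY,
      add_diagonal_mul_sylvesterSolve hm, mul_add, mul_assoc]
  rw [sum_range_succ' (fun k => a k * (c (n + 1 - k)).1),
    sum_range_succ (fun k => (c k).1 * diagonal (c (n + 1 - k)).2),
    sum_range_succ' (fun k => (c k).1 * diagonal (c (n + 1 - k)).2)]
  simp only [Nat.add_sub_add_right, Nat.sub_zero, Nat.sub_self, hc0, hcs]
  rw [gaugeDefect] at key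
  refine sub_eq_zero.mp (Eq.trans ?_ (sub_eq_zero.mpr key))
  abel

end GaugeCoeffs

theorem exists_gauge_diagonal (d : S → S) (A : Matrix ι ι S⟦X⟧) {P : Matrix ι ι S} {m : ι → S}
    (hP : IsUnit P.det)
    (hm : Pairwise fun i j => IsUnit (m i - m j)) (hA : A.map constantCoeff * P = P * diagonal m) :
    ∃ (R : Matrix ι ι S⟦X⟧) (μ : ι → S⟦X⟧), IsUnit R.det ∧
      Pairwise (fun i j => IsUnit (μ i - μ j)) ∧
      A * R + (X : S⟦X⟧) • R.map (coeffwise d) = R * diagonal μ := by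
  set c := gaugeCoeffs (fun n => A.map (coeff n)) d P m
  set R : Matrix ι ι S⟦X⟧ := of fun i j => mk fun n => (c n).1 i j
  set μ : ι → S⟦X⟧ := fun i => mk fun n => (c n).2 i
  have hR : ∀ n, R.map (coeff n) = (c n).1 := fun n => by ext i j; simp [R]
  have hμ : ∀ n, (diagonal μ).map (coeff n) = diagonal (c n).2 := fun n => by
    rw [diagonal_map (map_zero _)]; simp [μ]
  have hdR : ∀ n, (R.map (coeffwise d)).map (coeff n) = (c n).1.map d := fun n => by
    ext i j; simp [R, coeffwise]
  have hc0 : c 0 = (P, m) := gaugeCoeffs_zero _ d P m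
  have hA0 : A.map (coeff 0) * P = P * diagonal m := by rwa [coeff_zero_eq_constantCoeff]
  refine ⟨R, μ, ?_, fun i j hij => ?_, Matrix.ext_coeff fun n => ?_⟩
  · rw [isUnit_iff_constantCoeff, RingHom.map_det, RingHom.mapMatrix_apply,
      ← coeff_zero_eq_constantCoeff, hR, hc0]
    exact hP
  · change IsUnit (μ i - μ j)
    rw [isUnit_iff_constantCoeff, map_sub, ← coeff_zero_eq_constantCoeff_apply,
      ← coeff_zero_eq_constantCoeff_apply]
    simpa [μ, hc0] using hm hij
  · rw [Matrix.map_add _ (map_add _), map_coeff_mul, map_coeff_mul]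
    simp only [hR, hμ]
    cases n with
    | zero =>
      rw [map_coeff_zero_X_smul, add_zero]
      simpa only [zero_add, sum_range_one, Nat.sub_zero, hc0] using hA0
    | succ n =>
      rw [map_coeff_X_smul_succ, hdR]
      exact gaugeCoeffs_spec hP hm hA0 n

end FormalDiagonalization

/-- The columns are those of `M - β` and `M - α`, which Cayley–Hamilton makes eigenvectors. -/
theorem Matrix.mul_eigenbasis_fin_two {R : Type*} [CommRing R] (M : Matrix (Fin 2) (Fin 2) R)
    {α β : R} (hsum : α + β = M.trace) (hprod : α * β = M.det) :
    M * !![M 0 0 - β, M 0 1; M 1 0, M 1 1 - α] =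
      !![M 0 0 - β, M 0 1; M 1 0, M 1 1 - α] * diagonal ![α, β] := by
  rw [trace_fin_two] at hsum
  rw [det_fin_two] at hprod
  ext i j
  fin_cases i <;> fin_cases j <;> simp [mul_apply, Fin.sum_univ_two]
  · linear_combination (-M 0 0) * hsum + hprod
  · linear_combination (-M 0 1) * hsum
  · linear_combination (-M 1 0) * hsum
  · linear_combination (-M 1 1) * hsum + hprod

theorem Matrix.det_eigenbasis_fin_two {R : Type*} [CommRing R] (M : Matrix (Fin 2) (Fin 2) R)
    {α β : R} (hsum : α + β = M.trace) (hprod : α * β = M.det) :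
    det !![M 0 0 - β, M 0 1; M 1 0, M 1 1 - α] = (M 1 1 - α) * (α - β) := by
  rw [trace_fin_two] at hsum
  rw [det_fin_two] at hprod
  rw [det_fin_two_of]
  linear_combination α * hsum - hprod

theorem Matrix.exists_diagonalization_fin_two {F : Type*} [Field F] [IsAlgClosed F]
    (M : Matrix (Fin 2) (Fin 2) F) (hM : M.trace ^ 2 - 4 * M.det ≠ 0) :
    ∃ (P : Matrix (Fin 2) (Fin 2) F) (m : Fin 2 → F), IsUnit P.det ∧
      Pairwise (fun i j => IsUnit (m i - m j)) ∧ M * P = P * diagonal m := by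
  have hroot_ne : ∀ α, α * (M.trace - α) = M.det → α ≠ M.trace - α := by
    intro α hα h
    exact hM (by linear_combination (2 * α - M.trace) * h + 4 * hα)
  obtain ⟨α₀, hα₀⟩ := IsAlgClosed.exists_root M.charpoly (by simp [charpoly_degree_eq_dim])
  have hα₀ : α₀ * (M.trace - α₀) = M.det := by
    simp only [Polynomial.IsRoot, charpoly_fin_two, Polynomial.eval_add, Polynomial.eval_sub,
      Polynomial.eval_pow, Polynomial.eval_mul, Polynomial.eval_X, Polynomial.eval_C] at hα₀
    linear_combination -hα₀
  obtain ⟨α, hα, h11⟩ : ∃ α, α * (M.trace - α) = M.det ∧ M 1 1 ≠ α := by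
    by_cases h : M 1 1 = α₀
    · refine ⟨M.trace - α₀, by linear_combination hα₀, ?_⟩
      rw [h]
      exact hroot_ne α₀ hα₀
    · exact ⟨α₀, hα₀, h⟩
  have hαβ := hroot_ne α hα
  have hsum : α + (M.trace - α) = M.trace := by ring
  refine ⟨_, ![α, M.trace - α], ?_, ?_, M.mul_eigenbasis_fin_two hsum hα⟩
  · rw [M.det_eigenbasis_fin_two hsum hα, isUnit_iff_ne_zero]
    exact mul_ne_zero (sub_ne_zero.mpr h11) (sub_ne_zero.mpr hαβ)
  · intro i j hij
    fin_cases i <;> fin_cases j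
    · exact absurd rfl hij
    · simpa [isUnit_iff_ne_zero, sub_eq_zero] using hαβ
    · simpa [isUnit_iff_ne_zero, sub_eq_zero] using hαβ.symm
    · exact absurd rfl hij

theorem PowerSeries.exists_diagonalization_fin_two {F : Type*} [Field F] [IsAlgClosed F]
    (M : Matrix (Fin 2) (Fin 2) F⟦X⟧) (hM : constantCoeff (M.trace ^ 2 - 4 * M.det) ≠ 0) :
    ∃ (P : Matrix (Fin 2) (Fin 2) F⟦X⟧) (μ : Fin 2 → F⟦X⟧), IsUnit P.det ∧
      Pairwise (fun i j => IsUnit (μ i - μ j)) ∧ M * P = P * diagonal μ := by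
  have hM₀ : (M.map constantCoeff).trace ^ 2 - 4 * (M.map constantCoeff).det ≠ 0 := by
    simpa [trace_fin_two, RingHom.map_det, map_ofNat] using hM
  obtain ⟨P₀, m, hP₀, hm, hMP₀⟩ := (M.map constantCoeff).exists_diagonalization_fin_two hM₀
  -- with `d = 0` the gauge equation is the similarity `M P = P D`
  obtain ⟨P, μ, hP, hμ, hMP⟩ := exists_gauge_diagonal 0 M hP₀ hm hMP₀
  have hP0 : P.map (coeffwise 0) = 0 := by ext; simp [coeffwise]
  exact ⟨P, μ, hP, hμ, by simpa [hP0] using hMP⟩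

theorem inv_mul_mul_add_smul_eq {ι T : Type*} [Fintype ι] [DecidableEq ι] [CommRing T] (x : T)
    (δ : T → T) {A R D : Matrix ι ι T} (hR : IsUnit R.det)
    (h : A * R + x • R.map δ = R * D) : R⁻¹ * A * R + x • (R⁻¹ * R.map δ) = D := by
  rw [mul_assoc, ← Matrix.mul_smul, ← mul_add, h, ← mul_assoc, nonsing_inv_mul _ hR, one_mul]

theorem lD_ofPowerSeries (f : ℂ⟦X⟧) :
    lD (HahnSeries.ofPowerSeries ℤ ℂ f) = HahnSeries.ofPowerSeries ℤ ℂ (derivative ℂ f) := by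
  ext n
  change ((n : ℂ) + 1) * _ = _
  rw [PowerSeries.coeff_coe, PowerSeries.coeff_coe, coeff_derivative]
  rcases lt_trichotomy n (-1) with h | rfl | h
  · rw [if_pos (by omega), if_pos (by omega), mul_zero]
  · simp
  · lift n to ℕ using by omega
    rw [if_neg (by omega), if_neg (by omega), show ((n : ℤ) + 1).natAbs = n + 1 by omega,
      Int.natAbs_natCast]
    push_cast
    ring

theorem pD_map (F : ℂ⟦X⟧⟦X⟧) :
    pD (map (HahnSeries.ofPowerSeries ℤ ℂ) F) =
      map (HahnSeries.ofPowerSeries ℤ ℂ) (coeffwise (derivative ℂ) F) := by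
  ext n
  simp [pD, coeffwise, coeff_map, lD_ofPowerSeries]

theorem memOhat_map (F : ℂ⟦X⟧⟦X⟧) : MemOhat (map (HahnSeries.ofPowerSeries ℤ ℂ) F) :=
  fun n => by rw [coeff_map]; exact ⟨_, rfl⟩

theorem exists_map_eq_of_memOhat {F : Khat} (hF : MemOhat F) :
    ∃ F' : ℂ⟦X⟧⟦X⟧, map (HahnSeries.ofPowerSeries ℤ ℂ) F' = F := by
  choose f hf using hF
  exact ⟨mk f, PowerSeries.ext fun n => by rw [coeff_map, coeff_mk, hf]⟩

theorem lamGauge_map {A R D : Matrix (Fin 2) (Fin 2) ℂ⟦X⟧⟦X⟧} (hR : IsUnit R.det)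
    (h : A * R + (X : ℂ⟦X⟧⟦X⟧) • R.map (coeffwise (derivative ℂ)) = R * D) :
    lamGauge (A.map (map (HahnSeries.ofPowerSeries ℤ ℂ)))
        (R.map (map (HahnSeries.ofPowerSeries ℤ ℂ))) = D.map (map (HahnSeries.ofPowerSeries ℤ ℂ)) := by
  set φ : ℂ⟦X⟧⟦X⟧ →+* Khat := map (HahnSeries.ofPowerSeries ℤ ℂ)
  apply inv_mul_mul_add_smul_eq
  · rw [← RingHom.mapMatrix_apply, ← RingHom.map_det]
    exact hR.map φ
  · have hpD : (R.map φ).map pD = (R.map (coeffwise (derivative ℂ))).map φ := by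
      ext i j : 1
      exact pD_map (R i j)
    have := congrArg (fun M => M.map φ) h
    simp only [Matrix.map_add _ (map_add φ), Matrix.map_mul, Matrix.map_smul' _ _ _ (map_mul φ),
      φ, map_X] at this
    rwa [hpD]

theorem ev0_map (F : ℂ⟦X⟧⟦X⟧) :
    ev0 (map (HahnSeries.ofPowerSeries ℤ ℂ) F) =
      HahnSeries.ofPowerSeries ℤ ℂ (constantCoeff F) := by
  rw [ev0, ← coeff_zero_eq_constantCoeff_apply, coeff_map, coeff_zero_eq_constantCoeff_apply]

/-- If `A ∈ M₂(ℂ[[z,λ]])` has discriminant `(tr A(z,0))² - 4 det A(z,0)`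
a unit of `ℂ[[z]]`, then there is an invertible `R ∈ M₂(ℂ[[z,λ]])` such that
`Gauge_λ(A,R)` is diagonal. -/
theorem stmt7 (A : Matrix (Fin 2) (Fin 2) Khat) (hA : ∀ i j, MemOhat (A i j))
    (hdisc : ∃ h : PowerSeries ℂ,
      (A.map ev0).trace ^ 2 - 4 * (A.map ev0).det = HahnSeries.ofPowerSeries ℤ ℂ h ∧
      PowerSeries.coeff 0 h ≠ 0) :
    ∃ R : Matrix (Fin 2) (Fin 2) Khat,
      (∀ i j, MemOhat (R i j)) ∧
      (∃ S : Matrix (Fin 2) (Fin 2) Khat, (∀ i j, MemOhat (S i j)) ∧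
        R * S = 1 ∧ S * R = 1) ∧
      (∀ i j, i ≠ j → lamGauge A R i j = 0) := by
  set φ : ℂ⟦X⟧⟦X⟧ →+* Khat := map (HahnSeries.ofPowerSeries ℤ ℂ)
  choose A' hA' using fun i j => exists_map_eq_of_memOhat (hA i j)
  obtain rfl : (of A').map φ = A := Matrix.ext hA'
  obtain ⟨h, hh, h0⟩ := hdisc
  set M := (of A').map constantCoeff
  have hM : M.trace ^ 2 - 4 * M.det = h := by
    apply HahnSeries.ofPowerSeries_injective (Γ := ℤ)
    have hM₀ : ((of A').map φ).map ev0 = M.map (HahnSeries.ofPowerSeries ℤ ℂ) := by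
      ext i j : 1
      exact ev0_map _
    rw [← hh, hM₀, ← RingHom.mapMatrix_apply, ← RingHom.map_det]
    simp [trace_fin_two, map_ofNat]
  obtain ⟨P, μ, hP, hμ, hMP⟩ := PowerSeries.exists_diagonalization_fin_two M
    (by rwa [hM, ← coeff_zero_eq_constantCoeff_apply])
  obtain ⟨R, ν, hR, -, hAR⟩ := exists_gauge_diagonal (derivative ℂ) (of A') hP hμ hMP
  refine ⟨R.map φ, fun i j => memOhat_map _, ⟨R⁻¹.map φ, fun i j => memOhat_map _, ?_, ?_⟩, ?_⟩
  · rw [← Matrix.map_mul, mul_nonsing_inv _ hR, Matrix.map_one _ (map_zero φ) (map_one φ)]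
  · rw [← Matrix.map_mul, nonsing_inv_mul _ hR, Matrix.map_one _ (map_zero φ) (map_one φ)]
  · intro i j hij
    rw [lamGauge_map hR hAR, map_apply, diagonal_apply_ne _ hij, map_zero]

end
end

section
/- Let r ∈ ℂ((z))[[λ]] be such that its constant λ-term r(z,0) lies in ℂ[[z]] and is a unit of ℂ[[z]]. If r⁻¹·(dr/dz) ∈ ℂ[[z,λ]], then r ∈ ℂ[[z,λ]] and r is a unit of ℂ[[z,λ]]. -/
open PowerSeries

noncomputable section

/-! Put `u := r⁻¹ · dr/dz`, so that `dr/dz = r · u`. Comparing `λ^i`-coefficients,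
`r_i' = u_0 r_i + w_i`, where `w_i` only involves `r_0, …, r_{i-1}` and `u`, hence is holomorphic
by induction. If `r_i` had a pole, of order `-N > 0` with leading coefficient `c`, then `r_i'` would
contain `N c z^(N-1)`, while `u_0 r_i + w_i` has order at least `N`. So `r ∈ ℂ[[z,λ]]`, and its
constant term is a unit of `ℂ[[z]]`, so it is invertible in `ℂ[[z]][[λ]]`. -/

lemma mem_Oz_iff_zero_le_orderTop {f : K} : f ∈ Oz ↔ 0 ≤ f.orderTop := by
  constructor
  · rintro ⟨g, rfl⟩
    rw [HahnSeries.ofPowerSeries_apply, HahnSeries.orderTop_embDomain]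
    cases (HahnSeries.toPowerSeries.symm g).orderTop <;> simp
  · intro h
    obtain rfl | hf := eq_or_ne f 0
    · exact zero_mem _
    exact ⟨X ^ f.order.toNat * f.powerSeriesPart, LaurentSeries.X_order_mul_powerSeriesPart
      (Int.toNat_of_nonneg (HahnSeries.zero_le_orderTop_iff.mp h))⟩

lemma coeff_lD (f : K) (n : ℤ) : (lD f).coeff n = (n + 1) * f.coeff (n + 1) := rfl

lemma mem_Oz_of_lD_eq {f u w : K} (hu : u ∈ Oz) (hw : w ∈ Oz) (h : lD f = u * f + w) :
    f ∈ Oz := by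
  rw [mem_Oz_iff_zero_le_orderTop] at *
  by_contra! hneg
  obtain ⟨N, hN⟩ := WithTop.ne_top_iff_exists.mp hneg.ne_top
  rw [← hN] at hneg
  have hN0 : N < 0 := by exact_mod_cast hneg
  have hle : (N : WithTop ℤ) ≤ (u * f + w).orderTop := by
    refine le_trans (le_min ?_ (hneg.le.trans hw)) HahnSeries.min_orderTop_le_orderTop_add
    calc (N : WithTop ℤ) = 0 + f.orderTop := by rw [zero_add, hN]
      _ ≤ u.orderTop + f.orderTop := by gcongr
      _ ≤ (u * f).orderTop := HahnSeries.orderTop_add_le_mul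
  have hcoeff := HahnSeries.coeff_eq_zero_of_lt_orderTop
    (lt_of_lt_of_le (WithTop.coe_lt_coe.mpr (sub_one_lt N)) hle)
  rw [← h, coeff_lD, sub_add_cancel, Int.cast_sub, Int.cast_one, sub_add_cancel] at hcoeff
  exact (mul_ne_zero (by exact_mod_cast hN0.ne) (HahnSeries.coeff_orderTop_ne hN.symm)) hcoeff

namespace PowerSeries

variable {A : Type*} [CommRing A] (S : Subring A)

lemma coeff_mul_sub_coeff_mul_constantCoeff_mem {φ ψ : A⟦X⟧} {n : ℕ}
    (hφ : ∀ k < n, coeff k φ ∈ S) (hψ : ∀ k, coeff k ψ ∈ S) :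
    coeff n (φ * ψ) - coeff n φ * coeff 0 ψ ∈ S := by
  rw [coeff_mul, Finset.Nat.sum_antidiagonal_eq_sum_range_succ_mk, Finset.sum_range_succ,
    Nat.sub_self, add_sub_cancel_right]
  exact S.sum_mem fun k hk => S.mul_mem (hφ k (Finset.mem_range.mp hk)) (hψ _)

lemma exists_mul_eq_one_of_coeff_mem {φ : A⟦X⟧} (hφ : ∀ k, coeff k φ ∈ S)
    (h0 : IsUnit (⟨coeff 0 φ, hφ 0⟩ : S)) :
    ∃ ψ : A⟦X⟧, (∀ k, coeff k ψ ∈ S) ∧ φ * ψ = 1 := by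
  set Φ : S⟦X⟧ := mk fun k => ⟨coeff k φ, hφ k⟩
  have hΦ : map S.subtype Φ = φ := by ext k; simp [Φ]
  have hunit : IsUnit Φ := isUnit_iff_constantCoeff.mpr (by simpa [Φ] using h0)
  obtain ⟨Ψ, hΨ⟩ := hunit.exists_right_inv
  refine ⟨map S.subtype Ψ, fun k => by simp, ?_⟩
  rw [← hΦ, ← map_mul, hΨ, map_one]

end PowerSeries

lemma coeff_pD (F : Khat) (i : ℕ) : coeff i (pD F) = lD (coeff i F) := coeff_mk _ _

lemma memOhat_of_pD_eq_mul {r u : Khat} (hu : MemOhat u) (h : pD r = r * u) : MemOhat r := by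
  intro i
  induction i using Nat.strong_induction_on with
  | _ i ih =>
    refine mem_Oz_of_lD_eq (hu 0)
      (PowerSeries.coeff_mul_sub_coeff_mul_constantCoeff_mem Oz ih hu) ?_
    rw [← coeff_pD, h]
    ring

/-- If `r ∈ ℂ((z))[[λ]]` has constant `λ`-term a unit of `ℂ[[z]]` and
`r⁻¹·(dr/dz) ∈ ℂ[[z,λ]]`, then `r ∈ ℂ[[z,λ]]` and `r` is a unit of `ℂ[[z,λ]]`. -/
theorem stmt9 (r : Khat)
    (hr0 : ∃ g : PowerSeries ℂ, ev0 r = HahnSeries.ofPowerSeries ℤ ℂ g ∧ IsUnit g)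
    (hdlog : MemOhat (r⁻¹ * pD r)) :
    MemOhat r ∧ ∃ s : Khat, MemOhat s ∧ r * s = 1 := by
  obtain ⟨g, hg, hgu⟩ := hr0
  have hr : constantCoeff r ≠ 0 := by
    change ev0 r ≠ 0
    rw [hg, map_ne_zero_iff _ HahnSeries.ofPowerSeries_injective]
    exact hgu.ne_zero
  have hmem : MemOhat r :=
    memOhat_of_pD_eq_mul hdlog (by rw [← mul_assoc, PowerSeries.mul_inv_cancel r hr, one_mul])
  refine ⟨hmem, PowerSeries.exists_mul_eq_one_of_coeff_mem Oz hmem ?_⟩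
  have hconst : (⟨coeff 0 r, hmem 0⟩ : Oz) = (HahnSeries.ofPowerSeries ℤ ℂ).rangeRestrict g :=
    Subtype.ext (by simpa [ev0] using hg)
  exact hconst ▸ hgu.map _

end
end

section
/- Let F : G₁ → G₂ be a functor between groupoids. Then F is fully faithful if and only if for every object γ₂ of G₂ the essential fiber of F over γ₂ is either empty or equivalent to the terminal category (the category with exactly one object and only the identity morphism). -/
/-! A morphism `(γ₁, f) ⟶ (γ₁', f')` of the essential fiber is a `u` with `f' ∘ F u = f`; when
`f'` is invertible this is the single equation `F u = f ∘ f'⁻¹`, so for a fully faithful `F`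
there is exactly one. Conversely, the fiber over `F Y` contains `(Y, 𝟙)`, so it is equivalent to
the terminal category, and its hom-sets `(X, g) ⟶ (Y, 𝟙)` are exactly the fibers of
`F.map : (X ⟶ Y) → (F X ⟶ F Y)` over `g`; having one element each makes `F.map` bijective. -/

open CategoryTheory

namespace CategoryTheory

variable {C D : Type*} [Category C] [Category D] {F : C ⥤ D}

namespace CostructuredArrow

def homMkIdEquiv {X Y : C} (g : F.obj X ⟶ F.obj Y) :
    (mk g ⟶ mk (𝟙 (F.obj Y))) ≃ {u : X ⟶ Y // F.map u = g} where
  toFun φ := ⟨φ.left, by simpa using w φ⟩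
  invFun u := homMk u.1 (by simpa using u.2)
  left_inv φ := by ext; rfl
  right_inv _ := rfl

theorem nonempty_unique_hom_of_isIso [F.Full] [F.Faithful] {d : D}
    (a b : CostructuredArrow F d) [IsIso b.hom] : Nonempty (Unique (a ⟶ b)) :=
  ⟨{ default := homMk (F.preimage (a.hom ≫ inv b.hom))
     uniq φ := by
       ext
       apply F.map_injective
       simp }⟩

end CostructuredArrow

namespace Functor

variable (F)

theorem full_and_faithful_iff_map_bijective :
    F.Full ∧ F.Faithful ↔ ∀ X Y : C, Function.Bijective (F.map : (X ⟶ Y) → _) := by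
  rw [← FullyFaithful.nonempty_iff_map_bijective]
  exact ⟨fun ⟨_, _⟩ => ⟨.ofFullyFaithful F⟩, fun ⟨hF⟩ => ⟨hF.full, hF.faithful⟩⟩

theorem map_bijective_iff_forall_unique_hom_to_mk_id (X Y : C) :
    Function.Bijective (F.map : (X ⟶ Y) → _) ↔ ∀ g : F.obj X ⟶ F.obj Y,
      Nonempty (Unique (CostructuredArrow.mk g ⟶ CostructuredArrow.mk (𝟙 (F.obj Y)))) := by
  rw [Function.bijective_iff_existsUnique]
  refine forall_congr' fun g => ?_
  rw [← unique_subtype_iff_existsUnique]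
  let e := CostructuredArrow.homMkIdEquiv g
  exact ⟨fun ⟨_⟩ => ⟨e.unique⟩, fun ⟨_⟩ => ⟨e.symm.unique⟩⟩

end Functor

end CategoryTheory

/-- A functor `F : G₁ ⥤ G₂` between groupoids is fully faithful if and
only if for every object `γ₂` of `G₂` the essential fiber of `F` over `γ₂` (which, since
`G₂` is a groupoid, is the costructured arrow category over `γ₂`) is either empty or
equivalent to the terminal category. -/
theorem stmt17 {G₁ G₂ : Type*} [Groupoid G₁] [Groupoid G₂] (F : G₁ ⥤ G₂) :
    (F.Full ∧ F.Faithful) ↔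
      ∀ γ₂ : G₂, IsEmpty (CostructuredArrow F γ₂) ∨
        Nonempty (CostructuredArrow F γ₂ ≌ Discrete PUnit) := by
  constructor
  · rintro ⟨_, _⟩ γ₂
    refine (isEmpty_or_nonempty _).imp_right fun hne => ?_
    exact (equiv_punit_iff_unique _).2
      ⟨hne, fun a b => CostructuredArrow.nonempty_unique_hom_of_isIso a b⟩
  · intro h
    simp only [F.full_and_faithful_iff_map_bijective,
      F.map_bijective_iff_forall_unique_hom_to_mk_id]
    intro X Y g
    obtain hempty | hequiv := h (F.obj Y)
    · exact hempty.elim (CostructuredArrow.mk (𝟙 (F.obj Y)))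
    · exact ((equiv_punit_iff_unique _).1 hequiv).2 _ _
end
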